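/- For every x ∈ ℝ, lim_{n→∞} n(1 − Φ(b_n + x/b_n)) = e^{−x} and lim_{n→∞} n Φ(−b_n + x/b_n) = e^{x}. -/

import Mathlib

/-!
Mills' ratio `1 - Φ(t) ~ φ(t) / t` as `t → ∞` follows from l'Hôpital's rule. Since
`φ(t + x/t) / φ(t) = exp (-x - x² / (2t²)) → e^{-x}` and `(t + x/t) / t → 1`, it gives
`(1 - Φ(t + x/t)) / (1 - Φ(t)) → e^{-x}`. Now `1 - Φ(b n) = 1/n → 0` forces `b n → ∞`, and substituting
`t = b n` gives the first limit; the second is the first at `-x`, because `Φ(-y) = 1 - Φ(y)`.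
-/

open MeasureTheory ProbabilityTheory Filter Topology Real Set

/-- The standard normal density `φ`. -/
noncomputable def stdPDF (x : ℝ) : ℝ := (Real.sqrt (2 * Real.pi))⁻¹ * Real.exp (-x ^ 2 / 2)

/-- The standard normal distribution function `Φ`. -/
noncomputable def stdCDF (x : ℝ) : ℝ := ∫ t in Set.Iic x, stdPDF t

/-- Density of the standard bivariate Gaussian with correlation `ρ`. -/
noncomputable def bvDensity (ρ x y : ℝ) : ℝ :=
  (2 * Real.pi * Real.sqrt (1 - ρ ^ 2))⁻¹ *
    Real.exp (-(x ^ 2 - 2 * ρ * x * y + y ^ 2) / (2 * (1 - ρ ^ 2)))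

/-- The standard bivariate Gaussian measure on `ℝ × ℝ` (mean zero, unit variances,
correlation `ρ`). -/
noncomputable def bvGaussian (ρ : ℝ) : Measure (ℝ × ℝ) :=
  MeasureTheory.volume.withDensity fun p => ENNReal.ofReal (bvDensity ρ p.1 p.2)

/-- The standard Gumbel distribution function `Λ(x) = exp (-exp (-x))`. -/
noncomputable def gumbel (x : ℝ) : ℝ := Real.exp (-Real.exp (-x))

open Asymptotics

lemma stdPDF_eq_gaussianPDFReal : stdPDF = gaussianPDFReal 0 1 := by
  ext x
  simp [stdPDF, gaussianPDFReal]

lemma stdPDF_pos (x : ℝ) : 0 < stdPDF x := by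
  rw [stdPDF_eq_gaussianPDFReal]
  exact gaussianPDFReal_pos _ _ _ one_ne_zero

lemma continuous_stdPDF : Continuous stdPDF := by
  unfold stdPDF
  fun_prop

lemma integrable_stdPDF : Integrable stdPDF := by
  rw [stdPDF_eq_gaussianPDFReal]
  exact integrable_gaussianPDFReal _ _

lemma integral_stdPDF : ∫ x, stdPDF x = 1 := by
  rw [stdPDF_eq_gaussianPDFReal]
  exact integral_gaussianPDFReal_eq_one _ one_ne_zero

lemma stdPDF_neg (x : ℝ) : stdPDF (-x) = stdPDF x := by
  simp [stdPDF]

lemma hasDerivAt_stdPDF (x : ℝ) : HasDerivAt stdPDF (-(x * stdPDF x)) x := by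
  have h : HasDerivAt (fun y : ℝ => -y ^ 2 / 2) (-x) x :=
    ((hasDerivAt_pow 2 x).neg.div_const 2).congr_deriv (by ring)
  exact (h.exp.const_mul (√(2 * π))⁻¹).congr_deriv (by simp only [stdPDF]; ring)

lemma tendsto_stdPDF_atTop : Tendsto stdPDF atTop (𝓝 0) := by
  have h : Tendsto (fun x : ℝ => -x ^ 2 / 2) atTop atBot :=
    (tendsto_neg_atBot_iff.2 (tendsto_pow_atTop two_ne_zero)).atBot_div_const two_pos
  unfold stdPDF
  simpa only [Function.comp_def, mul_zero] using (tendsto_exp_atBot.comp h).const_mul (√(2 * π))⁻¹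

lemma stdPDF_add_div (x : ℝ) {t : ℝ} (ht : t ≠ 0) :
    stdPDF (t + x / t) = exp (-x - x ^ 2 / 2 * (t ^ 2)⁻¹) * stdPDF t := by
  simp only [stdPDF]
  rw [mul_left_comm, ← exp_add]
  congr 2
  field_simp
  ring

lemma stdCDF_eq_cdf_gaussianReal : stdCDF = cdf (gaussianReal 0 1) := by
  ext x
  rw [cdf_eq_real, measureReal_def, gaussianReal_apply_eq_integral _ one_ne_zero,
    ← stdPDF_eq_gaussianPDFReal,
    ENNReal.toReal_ofReal (setIntegral_nonneg measurableSet_Iic fun t _ => (stdPDF_pos t).le),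
    stdCDF]

lemma stdCDF_le_one (x : ℝ) : stdCDF x ≤ 1 := by
  rw [stdCDF_eq_cdf_gaussianReal]
  exact cdf_le_one _ x

lemma tendsto_one_sub_stdCDF_atTop : Tendsto (fun x => 1 - stdCDF x) atTop (𝓝 0) := by
  rw [stdCDF_eq_cdf_gaussianReal, ← sub_self 1]
  exact tendsto_const_nhds.sub (tendsto_cdf_atTop _)

lemma hasDerivAt_stdCDF (x : ℝ) : HasDerivAt stdCDF (stdPDF x) x := by
  have h : stdCDF = fun y => stdCDF 0 + ∫ t in (0 : ℝ)..y, stdPDF t := by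
    ext y
    rw [← intervalIntegral.integral_Iic_sub_Iic integrable_stdPDF.integrableOn
      integrable_stdPDF.integrableOn, stdCDF, stdCDF, add_sub_cancel]
  rw [h]
  exact (continuous_stdPDF.integral_hasStrictDerivAt 0 x).hasDerivAt.const_add _

lemma strictMono_stdCDF : StrictMono stdCDF :=
  strictMono_of_hasDerivAt_pos hasDerivAt_stdCDF stdPDF_pos

lemma one_sub_stdCDF_pos (x : ℝ) : 0 < 1 - stdCDF x :=
  sub_pos.2 ((strictMono_stdCDF (lt_add_one x)).trans_le (stdCDF_le_one _))

lemma stdCDF_neg (x : ℝ) : stdCDF (-x) = 1 - stdCDF x := by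
  have htotal := intervalIntegral.integral_Iic_add_Ioi (b := x) integrable_stdPDF.integrableOn
    integrable_stdPDF.integrableOn
  rw [integral_stdPDF] at htotal
  have hreflect : stdCDF (-x) = ∫ t in Ioi x, stdPDF t := by
    calc stdCDF (-x) = ∫ t in Iic (-x), stdPDF (-t) := by simp only [stdCDF, stdPDF_neg]
      _ = ∫ t in Ioi x, stdPDF t := by rw [integral_comp_neg_Iic, neg_neg]
  rw [hreflect, stdCDF, ← htotal, add_sub_cancel_left]

lemma tendsto_atTop_of_tendsto_one_sub_stdCDF {α : Type*} {l : Filter α} {b : α → ℝ}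
    (h : Tendsto (fun a => 1 - stdCDF (b a)) l (𝓝 0)) : Tendsto b l atTop := by
  refine tendsto_atTop.2 fun M => ?_
  filter_upwards [h.eventually (gt_mem_nhds (one_sub_stdCDF_pos M))] with a ha
  exact (strictMono_stdCDF.lt_iff_lt.1 (by linarith)).le

lemma tendsto_inv_sq_atTop_zero : Tendsto (fun t : ℝ => (t ^ 2)⁻¹) atTop (𝓝 0) :=
  tendsto_inv_atTop_zero.comp (tendsto_pow_atTop two_ne_zero)

lemma tendsto_one_sub_stdCDF_div_stdPDF_div :
    Tendsto (fun t => (1 - stdCDF t) / (stdPDF t / t)) atTop (𝓝 1) := by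
  have hdiv : Tendsto (fun t : ℝ => (1 + (t ^ 2)⁻¹)⁻¹) atTop (𝓝 1) := by
    simpa using (tendsto_inv_sq_atTop_zero.const_add 1).inv₀ (by norm_num)
  refine HasDerivAt.lhopital_zero_atTop_on_Ioi (a := 0) (f' := fun t => -stdPDF t)
    (g' := fun t => -(stdPDF t * (1 + (t ^ 2)⁻¹)))
    (fun t _ => (hasDerivAt_stdCDF t).const_sub 1)
    (fun t ht => ((hasDerivAt_stdPDF t).div (hasDerivAt_id' t) (ne_of_gt ht)).congr_deriv ?_)
    (fun t _ => neg_ne_zero.2 (mul_pos (stdPDF_pos t) (by positivity)).ne')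
    tendsto_one_sub_stdCDF_atTop ?_ (hdiv.congr fun t => ?_)
  · have ht : t ≠ 0 := ne_of_gt ht
    field_simp
    ring
  · simpa [div_eq_mul_inv] using tendsto_stdPDF_atTop.mul tendsto_inv_atTop_zero
  · rw [neg_div_neg_eq, div_mul_cancel_left₀ (stdPDF_pos t).ne']

lemma isEquivalent_one_sub_stdCDF :
    (fun t => 1 - stdCDF t) ~[atTop] fun t => stdPDF t / t :=
  isEquivalent_of_tendsto_one tendsto_one_sub_stdCDF_div_stdPDF_div

lemma tendsto_one_sub_stdCDF_add_div_ratio (x : ℝ) :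
    Tendsto (fun t => (1 - stdCDF (t + x / t)) / (1 - stdCDF t)) atTop (𝓝 (exp (-x))) := by
  have hc : Tendsto (fun t : ℝ => t + x / t) atTop atTop :=
    tendsto_id.atTop_add (tendsto_const_nhds.div_atTop tendsto_id)
  have hequiv := (isEquivalent_one_sub_stdCDF.comp_tendsto hc).div isEquivalent_one_sub_stdCDF
  have hlim : Tendsto (fun u => exp (-x - x ^ 2 / 2 * u) * (1 + x * u)⁻¹) (𝓝 0)
      (𝓝 (exp (-x))) := by
    convert (by fun_prop (disch := simp) : ContinuousAt
      (fun u : ℝ => exp (-x - x ^ 2 / 2 * u) * (1 + x * u)⁻¹) 0).tendsto using 2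
    simp
  refine hequiv.tendsto_nhds_iff.2 ((hlim.comp tendsto_inv_sq_atTop_zero).congr' ?_)
  filter_upwards [eventually_gt_atTop 0, hc.eventually_gt_atTop 0] with t ht hct
  simp only [Function.comp_apply, Pi.div_apply]
  rw [stdPDF_add_div x ht.ne']
  have ht' : t ^ 2 + x ≠ 0 := by
    have : t * (t + x / t) = t ^ 2 + x := by field_simp
    rw [← this]; positivity
  have hpdf := (stdPDF_pos t).ne'
  field_simp

theorem norming_constants_limits_general
    (b : ℕ → ℝ)
    (hb : ∀ n : ℕ, 2 ≤ n → 1 - stdCDF (b n) = 1 / (n : ℝ))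
    (x : ℝ) :
    Tendsto (fun n : ℕ => (n : ℝ) * (1 - stdCDF (b n + x / b n))) atTop (𝓝 (Real.exp (-x))) ∧
    Tendsto (fun n : ℕ => (n : ℝ) * stdCDF (-b n + x / b n)) atTop (𝓝 (Real.exp x)) := by
  have hb_tail : Tendsto (fun n => 1 - stdCDF (b n)) atTop (𝓝 0) :=
    tendsto_one_div_atTop_nhds_zero_nat.congr' <|
      (eventually_ge_atTop 2).mono fun n hn => (hb n hn).symm
  have hb_top := tendsto_atTop_of_tendsto_one_sub_stdCDF hb_tail
  have key (y : ℝ) :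
      Tendsto (fun n : ℕ => (n : ℝ) * (1 - stdCDF (b n + y / b n))) atTop (𝓝 (exp (-y))) :=
    ((tendsto_one_sub_stdCDF_add_div_ratio y).comp hb_top).congr' <|
      (eventually_ge_atTop 2).mono fun n hn => by
        dsimp only [Function.comp_apply]
        rw [hb n hn, div_div_eq_mul_div, div_one, mul_comm]
  have key_neg := key (-x)
  rw [neg_neg] at key_neg
  refine ⟨key x, key_neg.congr fun n => ?_⟩
  rw [← stdCDF_neg, neg_add, neg_div, neg_neg]

/-- For the norming constants `b n` defined by `1 - Φ(b n) = 1/n`: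
`n (1 - Φ(b n + x / b n)) → e^{-x}` and `n Φ(-b n + x / b n) → e^{x}`. -/
theorem norming_constants_limits
    (b : ℕ → ℝ) (hbpos : ∀ n : ℕ, 2 ≤ n → 0 < b n)
    (hb : ∀ n : ℕ, 2 ≤ n → 1 - stdCDF (b n) = 1 / (n : ℝ))
    (x : ℝ) :
    Tendsto (fun n : ℕ => (n : ℝ) * (1 - stdCDF (b n + x / b n))) atTop (𝓝 (Real.exp (-x))) ∧
    Tendsto (fun n : ℕ => (n : ℝ) * stdCDF (-b n + x / b n)) atTop (𝓝 (Real.exp x)) :=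
  norming_constants_limits_general b hb x
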